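/- Let q = (q_n)_{n=0}^∞ be a bounded sequence of positive integers with q₀ = 1, let c^{(n)} = (c^{(n)}_0,…,c^{(n)}_{q_n}) be positive integers with c^{(n)}_0 = c^{(n)}_{q_n} = d_res for n ≥ 1, let W^{(n)}_m ∈ ℝ^{c^{(n)}_m × c^{(n)}_{m−1}} and b^{(n)}_m ∈ ℝ^{c^{(n)}_m} for n ≥ 1, and let the initial block be given by W^{(0)}_1 = [W_s 0] − I_{d_res} with W_s ∈ ℝ^{d_res × d_in}, d_in ≤ d_res, and b^{(0)}_1 = b_s ∈ ℝ^{d_res}. If ∑_{k=0}^∞ ∏_{m=1}^{q_k} ‖W^{(k)}_m‖ < +∞ and ∑_{k=0}^∞ ∑_{m=1}^{q_k} (∏_{m'=m+1}^{q_k} ‖W^{(k)}_{m'}‖) ‖b^{(k)}_m‖ < +∞, then the deep neural network with shortcut connections, i.e. the sequence of maps x ↦ 𝒩_{c,q,n}((x,0)) with (x,0) ∈ ℝ^{d_res} the zero-padded input, converges pointwise on [0,1]^{d_in} as n → ∞. -/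

import Mathlib

open Filter Matrix Topology
open scoped ENNReal

noncomputable section

/-- The ReLU activation applied componentwise. -/
def relu {d : ℕ} (x : Fin d → ℝ) : Fin d → ℝ := fun i => max (x i) 0

/-- Cast a vector along an equality of dimensions. -/
def castVec {a b : ℕ} (h : a = b) (v : Fin a → ℝ) : Fin b → ℝ := fun i => v (Fin.cast h.symm i)

/-- Cast a matrix along equalities of its dimensions. -/
def mcast {a a' b b' : ℕ} (ha : a = a') (hb : b = b') (M : Matrix (Fin a) (Fin b) ℝ) :
    Matrix (Fin a') (Fin b') ℝ :=
  M.submatrix (Fin.cast ha.symm) (Fin.cast hb.symm)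

/-- Outputs of consecutive fully connected ReLU layers:
`hiddenSeq c W b m x = (σ(W m ⬝ · + b m) ∘ ⋯ ∘ σ(W 1 ⬝ · + b 1)) x` (0-based weight indices). -/
def hiddenSeq (c : ℕ → ℕ) (W : ∀ m, Matrix (Fin (c (m+1))) (Fin (c m)) ℝ)
    (b : ∀ m, Fin (c (m+1)) → ℝ) : (m : ℕ) → (Fin (c 0) → ℝ) → Fin (c m) → ℝ
  | 0 => fun x => x
  | m+1 => fun x => relu ((W m).mulVec (hiddenSeq c W b m x) + b m)

/-- A residual block with `q` layers (`q ≥ 1`), shortcut connection added before the last ReLU. -/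
def resBlock (d q : ℕ) (hq : 0 < q) (c : ℕ → ℕ) (hc0 : c 0 = d) (hcq : c q = d)
    (W : ∀ m, Matrix (Fin (c (m+1))) (Fin (c m)) ℝ)
    (b : ∀ m, Fin (c (m+1)) → ℝ) (x : Fin d → ℝ) : Fin d → ℝ :=
  castVec (show c (q-1+1) = d from (congrArg c (Nat.succ_pred_eq_of_pos hq)).trans hcq)
    (relu ((W (q-1)).mulVec (hiddenSeq c W b (q-1) (castVec hc0.symm x))
      + castVec (show c (q-1+1) = d from
          (congrArg c (Nat.succ_pred_eq_of_pos hq)).trans hcq).symm x + b (q-1)))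

/-- The deep network with shortcut connections: composition of residual blocks `0,…,n`. -/
def resNet (d : ℕ) (q : ℕ → ℕ) (hq : ∀ n, 0 < q n) (c : ℕ → ℕ → ℕ)
    (hc0 : ∀ n, c n 0 = d) (hcq : ∀ n, c n (q n) = d)
    (W : ∀ n m, Matrix (Fin (c n (m+1))) (Fin (c n m)) ℝ)
    (b : ∀ n m, Fin (c n (m+1)) → ℝ) :
    ℕ → (Fin d → ℝ) → Fin d → ℝ
  | 0 => resBlock d (q 0) (hq 0) (c 0) (hc0 0) (hcq 0) (W 0) (b 0)
  | n+1 => fun x => resBlock d (q (n+1)) (hq (n+1)) (c (n+1)) (hc0 (n+1)) (hcq (n+1))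
      (W (n+1)) (b (n+1)) (resNet d q hq c hc0 hcq W b n x)

/-- `J` is a 0/1 diagonal (activation) matrix. -/
def IsActivation {a : ℕ} (J : Matrix (Fin a) (Fin a) ℝ) : Prop :=
  (∀ i, J i i = 0 ∨ J i i = 1) ∧ ∀ i j, i ≠ j → J i j = 0

/-- The pre-activation vector `z` has exactly the sign pattern prescribed by the
activation matrix `J`: positive on the support of `J` and `≤ 0` off it. -/
def inPattern {a : ℕ} (J : Matrix (Fin a) (Fin a) ℝ) (z : Fin a → ℝ) : Prop :=
  ∀ i, J i i = 1 ↔ 0 < z i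

/-- `x` lies in the activation domain of a single residual block w.r.t. `J`. -/
def blockDomain (d q : ℕ) (hq : 0 < q) (c : ℕ → ℕ) (hc0 : c 0 = d) (hcq : c q = d)
    (W : ∀ m, Matrix (Fin (c (m+1))) (Fin (c m)) ℝ)
    (b : ∀ m, Fin (c (m+1)) → ℝ)
    (J : ∀ m, Matrix (Fin (c (m+1))) (Fin (c (m+1))) ℝ) (x : Fin d → ℝ) : Prop :=
  (∀ m, m + 1 < q →
    inPattern (J m) ((W m).mulVec (hiddenSeq c W b m (castVec hc0.symm x)) + b m)) ∧
  inPattern (J (q-1)) ((W (q-1)).mulVec (hiddenSeq c W b (q-1) (castVec hc0.symm x))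
    + castVec (show c (q-1+1) = d from
        (congrArg c (Nat.succ_pred_eq_of_pos hq)).trans hcq).symm x + b (q-1))

/-- The input fed to block `k` (output of the previous blocks; the input itself when `k = 0`). -/
def netInput (d : ℕ) (q : ℕ → ℕ) (hq : ∀ n, 0 < q n) (c : ℕ → ℕ → ℕ)
    (hc0 : ∀ n, c n 0 = d) (hcq : ∀ n, c n (q n) = d)
    (W : ∀ n m, Matrix (Fin (c n (m+1))) (Fin (c n m)) ℝ)
    (b : ∀ n m, Fin (c n (m+1)) → ℝ) :
    ℕ → (Fin d → ℝ) → Fin d → ℝ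
  | 0 => fun x => x
  | k+1 => resNet d q hq c hc0 hcq W b k

/-- Activation domain of the multi-residual-block network `𝒩_{c,q,n}` w.r.t. `J`:
`x ∈ [0,1]^d` and at each layer of each block the pre-activation has the pattern of `J`. -/
def InActDomain (d : ℕ) (q : ℕ → ℕ) (hq : ∀ n, 0 < q n) (c : ℕ → ℕ → ℕ)
    (hc0 : ∀ n, c n 0 = d) (hcq : ∀ n, c n (q n) = d)
    (W : ∀ n m, Matrix (Fin (c n (m+1))) (Fin (c n m)) ℝ)
    (b : ∀ n m, Fin (c n (m+1)) → ℝ)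
    (J : ∀ n m, Matrix (Fin (c n (m+1))) (Fin (c n (m+1))) ℝ)
    (n : ℕ) (x : Fin d → ℝ) : Prop :=
  (∀ i, x i ∈ Set.Icc (0:ℝ) 1) ∧
  ∀ k ≤ n, blockDomain d (q k) (hq k) (c k) (hc0 k) (hcq k) (W k) (b k) (J k)
    (netInput d q hq c hc0 hcq W b k x)

/-- `prodSeg f a n = f n * f (n-1) * ⋯ * f a` (the identity when `n < a`). -/
def prodSeg {α : Type*} [Monoid α] (f : ℕ → α) (a n : ℕ) : α :=
  ((List.range' a (n + 1 - a)).reverse.map f).prod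

/-- `innerProdFrom c W J a m = (J (a+m) W (a+m)) ⋯ (J (a+1) W (a+1)) (J a W a)`,
i.e. the product `∏_{m'=a+1}^{a+m} J_{m'} W_{m'}` in the 1-based indexing of the paper. -/
def innerProdFrom (c : ℕ → ℕ) (W : ∀ m, Matrix (Fin (c (m+1))) (Fin (c m)) ℝ)
    (J : ∀ m, Matrix (Fin (c (m+1))) (Fin (c (m+1))) ℝ) (a : ℕ) :
    (m : ℕ) → Matrix (Fin (c (a + m))) (Fin (c a)) ℝ
  | 0 => (1 : Matrix (Fin (c a)) (Fin (c a)) ℝ)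
  | m+1 => (J (a + m) * W (a + m)) * innerProdFrom c W J a m

/-- The matrix `∏_{m=1}^{q} J_m W_m + J_q` of a residual block. -/
def blockMat (d q : ℕ) (hq : 0 < q) (c : ℕ → ℕ) (hc0 : c 0 = d) (hcq : c q = d)
    (W : ∀ m, Matrix (Fin (c (m+1))) (Fin (c m)) ℝ)
    (J : ∀ m, Matrix (Fin (c (m+1))) (Fin (c (m+1))) ℝ) :
    Matrix (Fin d) (Fin d) ℝ :=
  mcast ((congrArg c (Nat.zero_add q)).trans hcq) hc0 (innerProdFrom c W J 0 q)
    + mcast (show c (q-1+1) = d from (congrArg c (Nat.succ_pred_eq_of_pos hq)).trans hcq)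
        (show c (q-1+1) = d from (congrArg c (Nat.succ_pred_eq_of_pos hq)).trans hcq) (J (q-1))

/-- `Aseq n = ∏_{k=0}^{n} (∏_{m=1}^{q_k} J^{(k)}_m W^{(k)}_m + J^{(k)}_{q_k})`. -/
def Aseq (d : ℕ) (q : ℕ → ℕ) (hq : ∀ n, 0 < q n) (c : ℕ → ℕ → ℕ)
    (hc0 : ∀ n, c n 0 = d) (hcq : ∀ n, c n (q n) = d)
    (W : ∀ n m, Matrix (Fin (c n (m+1))) (Fin (c n m)) ℝ)
    (J : ∀ n m, Matrix (Fin (c n (m+1))) (Fin (c n (m+1))) ℝ) (n : ℕ) :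
    Matrix (Fin d) (Fin d) ℝ :=
  prodSeg (fun k => blockMat d (q k) (hq k) (c k) (hc0 k) (hcq k) (W k) (J k)) 0 n

/-- `∑_{m=1}^{q} (∏_{m'=m+1}^{q} J_{m'} W_{m'}) J_m b_m` for one residual block. -/
def blockBias (d q : ℕ) (c : ℕ → ℕ) (hcq : c q = d)
    (W : ∀ m, Matrix (Fin (c (m+1))) (Fin (c m)) ℝ)
    (b : ∀ m, Fin (c (m+1)) → ℝ)
    (J : ∀ m, Matrix (Fin (c (m+1))) (Fin (c (m+1))) ℝ) : Fin d → ℝ :=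
  ∑ m ∈ (Finset.range q).attach,
    (mcast ((congrArg c (Nat.add_sub_cancel' (Finset.mem_range.mp m.2))).trans hcq) rfl
        (innerProdFrom c W J (m.1+1) (q - (m.1+1)))).mulVec ((J m.1).mulVec (b m.1))

/-- `Bseq n = ∑_{k=0}^{n} ∑_{m=1}^{q_k} [∏_{k'=k+1}^{n} (∏_{m'} J W + J)] (∏_{m'>m} J W) J_m b_m`. -/
def Bseq (d : ℕ) (q : ℕ → ℕ) (hq : ∀ n, 0 < q n) (c : ℕ → ℕ → ℕ)
    (hc0 : ∀ n, c n 0 = d) (hcq : ∀ n, c n (q n) = d)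
    (W : ∀ n m, Matrix (Fin (c n (m+1))) (Fin (c n m)) ℝ)
    (b : ∀ n m, Fin (c n (m+1)) → ℝ)
    (J : ∀ n m, Matrix (Fin (c n (m+1))) (Fin (c n (m+1))) ℝ) (n : ℕ) : Fin d → ℝ :=
  ∑ k ∈ Finset.range (n+1),
    (prodSeg (fun k' => blockMat d (q k') (hq k') (c k') (hc0 k') (hcq k') (W k') (J k'))
        (k+1) n).mulVec
      (blockBias d (q k) (c k) (hcq k) (W k) (b k) (J k))

/-- A family of norms on the spaces `ℝ^m` which is monotone in the sense of the paper. -/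
structure NormFamily where
  N : ∀ m : ℕ, (Fin m → ℝ) → ℝ
  eq_zero_iff : ∀ (m : ℕ) (x : Fin m → ℝ), N m x = 0 ↔ x = 0
  add_le : ∀ (m : ℕ) (x y : Fin m → ℝ), N m (x + y) ≤ N m x + N m y
  smul_eq : ∀ (m : ℕ) (r : ℝ) (x : Fin m → ℝ), N m (r • x) = |r| * N m x
  mono : ∀ (m : ℕ) (x y : Fin m → ℝ), (∀ i, |x i| ≤ |y i|) → N m x ≤ N m y

/-- The operator (matrix) norm induced by a family of vector norms. -/
def NormFamily.op (F : NormFamily) {a b : ℕ} (M : Matrix (Fin a) (Fin b) ℝ) : ℝ :=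
  sSup ((fun x => F.N a (M.mulVec x) / F.N b x) '' {x : Fin b → ℝ | x ≠ 0})

/-- 1-D Toeplitz convolution-with-zero-padding matrix of a filter mask `u ∈ ℝ^{2f+1}`:
`(T1 f d u) a b = u (f - b + a)` when `-f ≤ b - a ≤ f` and `0` otherwise. -/
def T1 (f d : ℕ) (u : Fin (2*f+1) → ℝ) : Matrix (Fin d) (Fin d) ℝ :=
  fun a b =>
    if h : -(f:ℤ) ≤ ((b:ℕ):ℤ) - ((a:ℕ):ℤ) ∧ ((b:ℕ):ℤ) - ((a:ℕ):ℤ) ≤ (f:ℤ) then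
      u ⟨((f:ℤ) - ((b:ℕ):ℤ) + ((a:ℕ):ℤ)).toNat, by omega⟩
    else 0

/-- 2-D block Toeplitz convolution matrix of a mask `v ∈ ℝ^{(2f+1)×(2f+1)}`:
the `(a,b)` block is `T1 f d (v (f - b + a))` when `-f ≤ b - a ≤ f` and `0` otherwise. -/
def T2 (f d : ℕ) (v : Fin (2*f+1) → Fin (2*f+1) → ℝ) :
    Matrix (Fin d × Fin d) (Fin d × Fin d) ℝ :=
  fun P Q =>
    if h : -(f:ℤ) ≤ ((Q.1:ℕ):ℤ) - ((P.1:ℕ):ℤ) ∧ ((Q.1:ℕ):ℤ) - ((P.1:ℕ):ℤ) ≤ (f:ℤ) then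
      T1 f d (v ⟨((f:ℤ) - ((Q.1:ℕ):ℤ) + ((P.1:ℕ):ℤ)).toNat, by omega⟩) P.2 Q.2
    else 0

/-- The block matrix `T(w)` of a multi-channel convolution
with `cin` input channels and `cout` output channels: the `(i,j)` block is `T2 f d (w i j)`. -/
def Tmulti (f d cin cout : ℕ)
    (w : Fin cout → Fin cin → Fin (2*f+1) → Fin (2*f+1) → ℝ) :
    Matrix (Fin cout × Fin d × Fin d) (Fin cin × Fin d × Fin d) ℝ :=
  fun P Q => T2 f d (w P.1 Q.1) P.2 Q.2

/-- Multi-channel 2-D convolution with zero padding, as matrix-vector multiplication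
by the Toeplitz-type matrices `T2`. -/
def convLayer (f d cin cout : ℕ)
    (w : Fin cout → Fin cin → Fin (2*f+1) → Fin (2*f+1) → ℝ)
    (x : Fin cin → Fin d → Fin d → ℝ) : Fin cout → Fin d → Fin d → ℝ :=
  fun i a b => ∑ j, ∑ s, ∑ t, T2 f d (w i j) (a, b) (s, t) * x j s t

/-- Cast the channel index of a tensor along an equality of channel numbers. -/
def castChan {d a b : ℕ} (h : a = b) (x : Fin a → Fin d → Fin d → ℝ) :
    Fin b → Fin d → Fin d → ℝ :=
  fun i => x (Fin.cast h.symm i)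

/-- Hidden layers of a convolutional residual block (with constant-per-channel biases `β`). -/
def convHidden (d : ℕ) (c : ℕ → ℕ) (f : ℕ → ℕ)
    (w : ∀ m, Fin (c (m+1)) → Fin (c m) → Fin (2 * f m + 1) → Fin (2 * f m + 1) → ℝ)
    (β : ∀ m, Fin (c (m+1)) → ℝ) :
    (m : ℕ) → (Fin (c 0) → Fin d → Fin d → ℝ) → Fin (c m) → Fin d → Fin d → ℝ
  | 0 => fun x => x
  | m+1 => fun x i a b =>
      max (convLayer (f m) d (c m) (c (m+1)) (w m) (convHidden d c f w β m x) i a b + β m i) 0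

/-- A convolutional residual block with `Q ≥ 1` convolutional layers and a shortcut connection. -/
def convBlock (d Q : ℕ) (hQ : 0 < Q) (cres : ℕ) (c : ℕ → ℕ)
    (hc0 : c 0 = cres) (hcq : c Q = cres) (f : ℕ → ℕ)
    (w : ∀ m, Fin (c (m+1)) → Fin (c m) → Fin (2 * f m + 1) → Fin (2 * f m + 1) → ℝ)
    (β : ∀ m, Fin (c (m+1)) → ℝ)
    (x : Fin cres → Fin d → Fin d → ℝ) : Fin cres → Fin d → Fin d → ℝ :=
  castChan (show c (Q-1+1) = cres from (congrArg c (Nat.succ_pred_eq_of_pos hQ)).trans hcq)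
    (fun i a b =>
      max (convLayer (f (Q-1)) d (c (Q-1)) (c (Q-1+1)) (w (Q-1))
            (convHidden d c f w β (Q-1) (castChan hc0.symm x)) i a b
          + x (Fin.cast (show c (Q-1+1) = cres from
              (congrArg c (Nat.succ_pred_eq_of_pos hQ)).trans hcq) i) a b
          + β (Q-1) i) 0)

/-- The deep convolutional ResNet without the output layer: sampling layer
`σ(x ∗ w_s + b_s)` (block `0`) followed by the convolutional residual blocks `1,…,n`. -/
def convNet (d cin cres : ℕ) (q : ℕ → ℕ) (hq : ∀ n, 0 < q n)
    (c : ℕ → ℕ → ℕ) (hc00 : c 0 0 = cin) (h01 : c 0 1 = cres)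
    (hc0 : ∀ n, 0 < n → c n 0 = cres) (hcq : ∀ n, 0 < n → c n (q n) = cres)
    (f : ℕ → ℕ → ℕ)
    (w : ∀ n m, Fin (c n (m+1)) → Fin (c n m) → Fin (2 * f n m + 1) → Fin (2 * f n m + 1) → ℝ)
    (β : ∀ n m, Fin (c n (m+1)) → ℝ) :
    ℕ → (Fin cin → Fin d → Fin d → ℝ) → Fin cres → Fin d → Fin d → ℝ
  | 0 => fun x => castChan h01 (fun i a b =>
      max (convLayer (f 0 0) d (c 0 0) (c 0 1) (w 0 0) (castChan hc00.symm x) i a b + β 0 0 i) 0)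
  | n+1 => fun x =>
      convBlock d (q (n+1)) (hq (n+1)) cres (c (n+1)) (hc0 (n+1) (Nat.succ_pos n))
        (hcq (n+1) (Nat.succ_pos n)) (f (n+1)) (w (n+1)) (β (n+1))
        (convNet d cin cres q hq c hc00 h01 hc0 hcq f w β n x)

/-- The ℓ_p norm of a vector, `p ∈ [1,∞]`. -/
def lpNorm (p : ℝ≥0∞) {ι : Type*} [Fintype ι] (x : ι → ℝ) : ℝ :=
  if p = ∞ then ⨆ i, |x i| else (∑ i, |x i| ^ p.toReal) ^ (1 / p.toReal)

/-- The matrix (operator) norm induced by the ℓ_p vector norms. -/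
def opNormP (p : ℝ≥0∞) {α β : Type*} [Fintype α] [Fintype β] (M : Matrix α β ℝ) : ℝ :=
  sSup ((fun x => lpNorm p (M.mulVec x) / lpNorm p x) '' {x : β → ℝ | x ≠ 0})

/-- Maximum absolute column sum of a matrix (the operator norm induced by ℓ₁). -/
def maxColSum {α β : Type*} [Fintype α] [Fintype β] (M : Matrix α β ℝ) : ℝ :=
  ⨆ j, ∑ i, |M i j|

/-- Maximum absolute row sum of a matrix (the operator norm induced by ℓ_∞). -/
def maxRowSum {α β : Type*} [Fintype α] [Fintype β] (M : Matrix α β ℝ) : ℝ :=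
  ⨆ i, ∑ j, |M i j|

/-- The block matrix with blocks `A i j ∈ ℝ^{r×c}`, `i < N`, `j < M`. -/
def blockMatrixOf {N M r c : ℕ} (A : Fin N → Fin M → Matrix (Fin r) (Fin c) ℝ) :
    Matrix (Fin N × Fin r) (Fin M × Fin c) ℝ :=
  fun p q => A p.1 q.1 p.2 q.2

/-- The factor `N^{(n)}_m` of Theorem 5.2: the bound of Lemma 5.1 on `‖T(w)‖_p`. -/
def Nfactor (p : ℝ≥0∞) {f cin cout : ℕ}
    (w : Fin cout → Fin cin → Fin (2*f+1) → Fin (2*f+1) → ℝ) : ℝ :=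
  (⨆ j : Fin cin, ∑ i, ∑ i', ∑ j', |w i j i' j'|) ^ ((1/p).toReal)
    * (⨆ i : Fin cout, ∑ j, ∑ i', ∑ j', |w i j i' j'|) ^ (1 - (1/p).toReal)

/-- Zero padding of a vector `x ∈ ℝ^{din}` to a vector `(x, 0) ∈ ℝ^{d}`. -/
def padVec (din d : ℕ) (x : Fin din → ℝ) : Fin d → ℝ :=
  fun i => if h : (i : ℕ) < din then x ⟨i, h⟩ else 0

/-- The matrix `[Ws  0] ∈ ℝ^{d × d}` obtained by padding `Ws ∈ ℝ^{d × din}` with zero columns. -/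
def padMat (din d : ℕ) (Ws : Matrix (Fin d) (Fin din) ℝ) : Matrix (Fin d) (Fin d) ℝ :=
  fun i j => if h : (j : ℕ) < din then Ws i ⟨j, h⟩ else 0

/-!
For `s ≥ 0` one has `|σ(t) - s| ≤ |t - s|`, so a residual block moves a nonnegative input `y`
by at most `(∏ ‖W_m‖) ‖y‖ + ∑_m (∏_{m' > m} ‖W_{m'}‖) ‖b_m‖`. By the discrete Grönwall
inequality the summability hypotheses then bound the iterates uniformly, which makes their
increments summable: the outputs form a Cauchy sequence.
-/

namespace NormFamily

variable (F : NormFamily)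

lemma N_zero (m : ℕ) : F.N m 0 = 0 := (F.eq_zero_iff m 0).mpr rfl

lemma N_neg {m : ℕ} (x : Fin m → ℝ) : F.N m (-x) = F.N m x := by
  simpa using F.smul_eq m (-1) x

lemma N_nonneg {m : ℕ} (x : Fin m → ℝ) : 0 ≤ F.N m x := by
  have h := F.add_le m x (-x)
  rw [add_neg_cancel, F.N_zero, F.N_neg] at h
  linarith

lemma N_pos {m : ℕ} {x : Fin m → ℝ} (hx : x ≠ 0) : 0 < F.N m x :=
  (F.N_nonneg x).lt_of_ne fun h => hx ((F.eq_zero_iff m x).mp h.symm)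

lemma N_castVec {a b : ℕ} (h : a = b) (v : Fin a → ℝ) : F.N b (castVec h v) = F.N a v := by
  subst h
  rfl

lemma N_relu_le {m : ℕ} (x : Fin m → ℝ) : F.N m (relu x) ≤ F.N m x :=
  F.mono m _ _ fun i => by simpa [relu] using abs_max_sub_max_le_abs (x i) 0 0

lemma exists_norm_le_mul_N (m : ℕ) : ∃ K, 0 ≤ K ∧ ∀ x : Fin m → ℝ, ‖x‖ ≤ K * F.N m x := by
  have hsingle : ∀ i : Fin m, 0 < F.N m (Pi.single i 1) := fun i =>
    F.N_pos fun h => by simpa using congrFun h i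
  have hK : 0 ≤ ∑ i, (F.N m (Pi.single i 1))⁻¹ :=
    Finset.sum_nonneg fun i _ => inv_nonneg.mpr (hsingle i).le
  refine ⟨_, hK, fun x => (pi_norm_le_iff_of_nonneg (mul_nonneg hK (F.N_nonneg x))).mpr
    fun i => ?_⟩
  have hcoord : |x i| * F.N m (Pi.single i 1) ≤ F.N m x := by
    rw [← F.smul_eq]
    refine F.mono m _ _ fun j => ?_
    rcases eq_or_ne j i with rfl | hji
    · simp
    · simp [hji]
  calc ‖x i‖ ≤ (F.N m (Pi.single i 1))⁻¹ * F.N m x := by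
        rw [Real.norm_eq_abs, le_inv_mul_iff₀ (hsingle i), mul_comm]
        exact hcoord
    _ ≤ (∑ i, (F.N m (Pi.single i 1))⁻¹) * F.N m x :=
        mul_le_mul_of_nonneg_right (Finset.single_le_sum
          (fun j _ => inv_nonneg.mpr (hsingle j).le) (Finset.mem_univ i)) (F.N_nonneg x)

lemma exists_N_mulVec_le {a b : ℕ} (M : Matrix (Fin a) (Fin b) ℝ) :
    ∃ C, ∀ z, F.N a (M *ᵥ z) ≤ C * F.N b z := by
  obtain ⟨K, hK0, hK⟩ := F.exists_norm_le_mul_N b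
  have hcol : 0 ≤ ∑ j, F.N a (M.col j) := Finset.sum_nonneg fun j _ => F.N_nonneg _
  refine ⟨K * ∑ j, F.N a (M.col j), fun z => ?_⟩
  have hz : M *ᵥ z = ∑ j, z j • M.col j := by
    ext i
    simp [Matrix.mulVec, dotProduct, mul_comm]
  calc F.N a (M *ᵥ z) ≤ ∑ j, F.N a (z j • M.col j) :=
        hz ▸ Finset.le_sum_of_subadditive _ (F.N_zero a).le (F.add_le a) _ _
    _ = ∑ j, |z j| * F.N a (M.col j) := by simp only [F.smul_eq]
    _ ≤ ∑ j, ‖z‖ * F.N a (M.col j) := Finset.sum_le_sum fun j _ =>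
        mul_le_mul_of_nonneg_right (norm_le_pi_norm z j) (F.N_nonneg _)
    _ ≤ K * F.N b z * ∑ j, F.N a (M.col j) := by
        rw [← Finset.mul_sum]
        exact mul_le_mul_of_nonneg_right (hK z) hcol
    _ = K * (∑ j, F.N a (M.col j)) * F.N b z := by ring

lemma bddAbove_op {a b : ℕ} (M : Matrix (Fin a) (Fin b) ℝ) :
    BddAbove ((fun x => F.N a (M *ᵥ x) / F.N b x) '' {x : Fin b → ℝ | x ≠ 0}) := by
  obtain ⟨C, hC⟩ := F.exists_N_mulVec_le M
  exact ⟨C, by rintro _ ⟨z, hz, rfl⟩; exact (div_le_iff₀ (F.N_pos hz)).mpr (hC z)⟩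

lemma N_mulVec_le {a b : ℕ} (M : Matrix (Fin a) (Fin b) ℝ) (x : Fin b → ℝ) :
    F.N a (M *ᵥ x) ≤ F.op M * F.N b x := by
  rcases eq_or_ne x 0 with rfl | hx
  · simp [F.N_zero]
  · exact (div_le_iff₀ (F.N_pos hx)).mp (le_csSup (F.bddAbove_op M) ⟨x, hx, rfl⟩)

lemma op_nonneg {a b : ℕ} (M : Matrix (Fin a) (Fin b) ℝ) : 0 ≤ F.op M :=
  Real.sSup_nonneg (by rintro _ ⟨z, -, rfl⟩; exact div_nonneg (F.N_nonneg _) (F.N_nonneg _))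

theorem exists_tendsto_of_N_sub_le {m : ℕ} {Y : ℕ → Fin m → ℝ} {a β : ℕ → ℝ}
    (ha0 : ∀ n, 0 ≤ a n) (hβ0 : ∀ n, 0 ≤ β n) (ha : Summable a) (hβ : Summable β)
    (hY : ∀ n, F.N m (Y (n+1) - Y n) ≤ a n * F.N m (Y n) + β n) :
    ∃ y, Tendsto Y atTop (𝓝 y) := by
  have hgrowth : ∀ n, F.N m (Y (n+1)) ≤ (1 + a n) * F.N m (Y n) + β n := fun n => by
    have := F.add_le m (Y (n+1) - Y n) (Y n)
    rw [sub_add_cancel] at this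
    linarith [hY n]
  have hbound : ∀ n, F.N m (Y n) ≤ (F.N m (Y 0) + ∑' n, β n) * Real.exp (∑' n, a n) := by
    intro n
    refine (discrete_gronwall (u := fun n => F.N m (Y n)) (F.N_nonneg _)
      (fun n _ => hgrowth n) (fun n _ => ha0 n) (fun n _ => hβ0 n) n.zero_le).trans ?_
    rw [← Finset.range_eq_Ico]
    have hβsum := hβ.sum_le_tsum (Finset.range n) fun i _ => hβ0 i
    have hasum := ha.sum_le_tsum (Finset.range n) fun i _ => ha0 i
    gcongr
    exact add_nonneg (F.N_nonneg _) (tsum_nonneg hβ0)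
  generalize (F.N m (Y 0) + ∑' n, β n) * Real.exp (∑' n, a n) = C at hbound
  obtain ⟨K, hK0, hK⟩ := F.exists_norm_le_mul_N m
  have hstep : ∀ n, dist (Y n) (Y (n+1)) ≤ K * (a n * C + β n) := fun n => by
    rw [dist_comm, dist_eq_norm]
    refine (hK _).trans (mul_le_mul_of_nonneg_left ((hY n).trans ?_) hK0)
    gcongr
    exacts [ha0 n, hbound n]
  exact cauchySeq_tendsto_of_complete
    (cauchySeq_of_dist_le_of_summable _ hstep (((ha.mul_right C).add hβ).mul_left K))

section Layers

variable {c : ℕ → ℕ} (W : ∀ m, Matrix (Fin (c (m+1))) (Fin (c m)) ℝ)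
  (b : ∀ m, Fin (c (m+1)) → ℝ)

def opNormProd (n : ℕ) : ℝ := ∏ m ∈ Finset.range n, F.op (W m)

def biasNormSum (n : ℕ) : ℝ :=
  ∑ m ∈ Finset.range n, (∏ m' ∈ Finset.Ico (m+1) n, F.op (W m')) * F.N (c (m+1)) (b m)

lemma opNormProd_nonneg (n : ℕ) : 0 ≤ F.opNormProd W n :=
  Finset.prod_nonneg fun _ _ => F.op_nonneg _

lemma biasNormSum_nonneg (n : ℕ) : 0 ≤ F.biasNormSum W b n :=
  Finset.sum_nonneg fun _ _ =>
    mul_nonneg (Finset.prod_nonneg fun _ _ => F.op_nonneg _) (F.N_nonneg _)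

lemma opNormProd_succ (n : ℕ) : F.opNormProd W (n+1) = F.op (W n) * F.opNormProd W n := by
  rw [opNormProd, Finset.prod_range_succ, mul_comm]
  rfl

lemma biasNormSum_succ (n : ℕ) :
    F.biasNormSum W b (n+1) = F.op (W n) * F.biasNormSum W b n + F.N (c (n+1)) (b n) := by
  rw [biasNormSum, biasNormSum, Finset.sum_range_succ, Finset.mul_sum, Finset.Ico_self,
    Finset.prod_empty, one_mul]
  congr 1
  refine Finset.sum_congr rfl fun m hm => ?_
  rw [Finset.prod_Ico_succ_top (Finset.mem_range.mp hm), mul_comm _ (F.op (W n)), mul_assoc]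

lemma N_mulVec_add_le_succ {n : ℕ} {h : Fin (c n) → ℝ} {s : ℝ}
    (hh : F.N (c n) h ≤ F.opNormProd W n * s + F.biasNormSum W b n) :
    F.N (c (n+1)) (W n *ᵥ h + b n) ≤ F.opNormProd W (n+1) * s + F.biasNormSum W b (n+1) := by
  rw [F.opNormProd_succ, F.biasNormSum_succ]
  calc F.N (c (n+1)) (W n *ᵥ h + b n)
      ≤ F.op (W n) * F.N (c n) h + F.N (c (n+1)) (b n) :=
        (F.add_le _ _ _).trans (add_le_add_left (F.N_mulVec_le _ _) _)
    _ ≤ F.op (W n) * (F.opNormProd W n * s + F.biasNormSum W b n) + F.N (c (n+1)) (b n) := by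
        gcongr
        exact F.op_nonneg _
    _ = _ := by ring

lemma N_hiddenSeq_le (y : Fin (c 0) → ℝ) (n : ℕ) :
    F.N (c n) (hiddenSeq c W b n y) ≤ F.opNormProd W n * F.N (c 0) y + F.biasNormSum W b n := by
  induction n with
  | zero => simp [hiddenSeq, opNormProd, biasNormSum]
  | succ n ih => exact (F.N_relu_le _).trans (F.N_mulVec_add_le_succ W b ih)

end Layers

lemma N_castVec_relu_add_sub_le {a d : ℕ} (e : a = d) (z β : Fin a → ℝ) {y : Fin d → ℝ}
    (hy : ∀ i, 0 ≤ y i) :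
    F.N d (castVec e (relu (z + castVec e.symm y + β)) - y) ≤ F.N a (z + β) := by
  subst e
  refine F.mono _ _ _ fun i => ?_
  calc |(castVec rfl (relu (z + castVec rfl y + β)) - y) i|
      = |max (z i + y i + β i) 0 - max (y i) 0| := by rw [max_eq_left (hy i)]; rfl
    _ ≤ |z i + y i + β i - y i| := abs_max_sub_max_le_abs _ _ _
    _ = |(z + β) i| := by rw [Pi.add_apply, add_right_comm, add_sub_cancel_right]

lemma N_resBlock_sub_le {d Q : ℕ} (hQ : 0 < Q) {c : ℕ → ℕ} (hc0 : c 0 = d) (hcq : c Q = d)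
    (W : ∀ m, Matrix (Fin (c (m+1))) (Fin (c m)) ℝ) (b : ∀ m, Fin (c (m+1)) → ℝ)
    {y : Fin d → ℝ} (hy : ∀ i, 0 ≤ y i) :
    F.N d (resBlock d Q hQ c hc0 hcq W b y - y)
      ≤ F.opNormProd W Q * F.N d y + F.biasNormSum W b Q := by
  obtain ⟨m, rfl⟩ := Nat.exists_eq_succ_of_ne_zero hQ.ne'
  refine (F.N_castVec_relu_add_sub_le _ _ _ hy).trans (F.N_mulVec_add_le_succ W b ?_)
  simpa [F.N_castVec] using F.N_hiddenSeq_le W b (castVec hc0.symm y) m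

end NormFamily

lemma resBlock_nonneg {d Q : ℕ} (hQ : 0 < Q) {c : ℕ → ℕ} (hc0 : c 0 = d) (hcq : c Q = d)
    (W : ∀ m, Matrix (Fin (c (m+1))) (Fin (c m)) ℝ) (b : ∀ m, Fin (c (m+1)) → ℝ)
    (y : Fin d → ℝ) (i : Fin d) : 0 ≤ resBlock d Q hQ c hc0 hcq W b y i :=
  le_max_right _ _

lemma padVec_nonneg {din d : ℕ} {x : Fin din → ℝ} (hx : ∀ i, 0 ≤ x i) (i : Fin d) :
    0 ≤ padVec din d x i := by
  unfold padVec
  split_ifs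
  exacts [hx _, le_rfl]

section Network

variable {d : ℕ} {q : ℕ → ℕ} (hq : ∀ n, 0 < q n) {c : ℕ → ℕ → ℕ}
  (hc0 : ∀ n, c n 0 = d) (hcq : ∀ n, c n (q n) = d)
  (W : ∀ n m, Matrix (Fin (c n (m+1))) (Fin (c n m)) ℝ) (b : ∀ n m, Fin (c n (m+1)) → ℝ)

lemma netInput_succ (k : ℕ) (x : Fin d → ℝ) :
    netInput d q hq c hc0 hcq W b (k+1) x
      = resBlock d (q k) (hq k) (c k) (hc0 k) (hcq k) (W k) (b k)
          (netInput d q hq c hc0 hcq W b k x) := by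
  cases k <;> rfl

lemma netInput_nonneg {x : Fin d → ℝ} (hx : ∀ i, 0 ≤ x i) (k : ℕ) (i : Fin d) :
    0 ≤ netInput d q hq c hc0 hcq W b k x i := by
  cases k with
  | zero => exact hx i
  | succ k => rw [netInput_succ]; exact resBlock_nonneg ..

end Network

theorem stmt5_general (F : NormFamily)
    (d din : ℕ)
    (q : ℕ → ℕ) (hq : ∀ k, 0 < q k)
    (c : ℕ → ℕ → ℕ)
    (hc0 : ∀ k, c k 0 = d) (hcq : ∀ k, c k (q k) = d)
    (W : ∀ k m, Matrix (Fin (c k (m+1))) (Fin (c k m)) ℝ)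
    (b : ∀ k m, Fin (c k (m+1)) → ℝ)
    (hW : Summable fun k => ∏ m ∈ Finset.range (q k), F.op (W k m))
    (hb : Summable fun k => ∑ m ∈ Finset.range (q k),
      (∏ m' ∈ Finset.Ico (m+1) (q k), F.op (W k m')) * F.N (c k (m+1)) (b k m)) :
    ∀ x : Fin din → ℝ, (∀ i, x i ∈ Set.Icc (0:ℝ) 1) →
      ∃ y, Tendsto (fun n => resNet d q hq c hc0 hcq W b n (padVec din d x))
        atTop (nhds y) := by
  intro x hx
  have hX := padVec_nonneg (d := d) fun i => (hx i).1
  obtain ⟨y, hy⟩ := F.exists_tendsto_of_N_sub_le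
    (Y := fun k => netInput d q hq c hc0 hcq W b k (padVec din d x))
    (fun k => F.opNormProd_nonneg (W k) (q k)) (fun k => F.biasNormSum_nonneg (W k) (b k) (q k))
    hW hb fun k => by
      rw [netInput_succ]
      exact F.N_resBlock_sub_le _ _ _ _ _ (netInput_nonneg hq hc0 hcq W b hX k)
  exact ⟨y, (tendsto_add_atTop_iff_nat 1).mpr hy⟩

theorem stmt5 (F : NormFamily)
    (d din : ℕ) (hd : 0 < d) (hdin : 0 < din) (hdind : din ≤ d)
    (q : ℕ → ℕ) (hq : ∀ k, 0 < q k) (hq0 : q 0 = 1) (hqb : ∃ Q, ∀ k, q k ≤ Q)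
    (c : ℕ → ℕ → ℕ) (hcpos : ∀ k m, m ≤ q k → 0 < c k m)
    (hc0 : ∀ k, c k 0 = d) (hcq : ∀ k, c k (q k) = d) (h01 : c 0 1 = d)
    (W : ∀ k m, Matrix (Fin (c k (m+1))) (Fin (c k m)) ℝ)
    (b : ∀ k m, Fin (c k (m+1)) → ℝ)
    (Ws : Matrix (Fin d) (Fin din) ℝ)
    (hW0 : W 0 0 = mcast h01.symm (hc0 0).symm (padMat din d Ws - 1))
    (hW : Summable fun k => ∏ m ∈ Finset.range (q k), F.op (W k m))
    (hb : Summable fun k => ∑ m ∈ Finset.range (q k),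
      (∏ m' ∈ Finset.Ico (m+1) (q k), F.op (W k m')) * F.N (c k (m+1)) (b k m)) :
    ∀ x : Fin din → ℝ, (∀ i, x i ∈ Set.Icc (0:ℝ) 1) →
      ∃ y, Tendsto (fun n => resNet d q hq c hc0 hcq W b n (padVec din d x))
        atTop (nhds y) :=
  stmt5_general F d din q hq c hc0 hcq W b hW hb

end
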